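/- arXiv:1706.04066 — 3 statements merged into one kernel-verified Lean document; each statement's English description precedes it below -/
import Mathlib

section
/- Let Y > 0, M ∈ ℕ with M ≥ 1, and μ ∈ (0,1]. Define the graded mesh points y_m = (m/M)^{1/μ} Y for m = 0,1,…,M and the element lengths h_m = y_m − y_{m−1}. Then h_1 = M^{−1/μ} Y, and for every m with 2 ≤ m ≤ M it holds (2^{(μ−1)/μ}/μ) · y_m^{1−μ} Y^{μ} M^{−1} ≤ h_m ≤ (1/μ) · y_m^{1−μ} Y^{μ} M^{−1}. -/
/-!
With `a = 1/μ ≥ 1`, the element length is `h_m = Y M^{-a} (m^a - (m-1)^a)`, and by the mean value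
theorem `m^a - (m-1)^a = a ξ^{a-1}` for some `ξ ∈ (m-1, m)`. Since `x^{a-1}` is monotone and
`m/2 ≤ m-1` for `m ≥ 2`, this lies between `a (m/2)^{a-1}` and `a m^{a-1}`; finally
`y_m^{1-μ} Y^μ M^{-1} = m^{a-1} M^{-a} Y`.
-/

lemma Real.rpow_sub_rpow_mem_Icc {a s t : ℝ} (ha : 1 ≤ a) (hs : 0 ≤ s) (hst : s < t) :
    a * s ^ (a - 1) * (t - s) ≤ t ^ a - s ^ a ∧ t ^ a - s ^ a ≤ a * t ^ (a - 1) * (t - s) := by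
  obtain ⟨ξ, ⟨hsξ, hξt⟩, hslope⟩ := exists_hasDerivAt_eq_slope (fun x ↦ x ^ a)
    (fun x ↦ a * x ^ (a - 1)) hst
    (fun x hx ↦ (Real.continuousAt_rpow_const x a (Or.inr (by linarith))).continuousWithinAt)
    (fun x hx ↦ Real.hasDerivAt_rpow_const (Or.inr ha))
  have hdiff : t ^ a - s ^ a = a * ξ ^ (a - 1) * (t - s) := by
    rw [hslope, div_mul_cancel₀ _ (sub_ne_zero.mpr hst.ne')]
  rw [hdiff]
  have hξ : 0 ≤ ξ := by linarith
  have hts : 0 ≤ t - s := by linarith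
  have ha1 : 0 ≤ a - 1 := by linarith
  exact ⟨by gcongr, by gcongr⟩

lemma graded_node_rpow_mul_eq {Y M m μ : ℝ} (hY : 0 < Y) (hM : 0 < M) (hm : 0 ≤ m) (hμ : 0 < μ) :
    ((m / M) ^ (1 / μ) * Y) ^ (1 - μ) * Y ^ μ * M⁻¹ = m ^ (1 / μ - 1) / M ^ (1 / μ) * Y := by
  have hexp : 1 / μ * (1 - μ) = 1 / μ - 1 := by field_simp
  have hY_split : Y ^ (1 - μ) * Y ^ μ = Y := by
    rw [← Real.rpow_add hY]; norm_num
  have hM_split : M ^ (1 / μ) = M ^ (1 / μ - 1) * M := by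
    rw [← Real.rpow_add_one hM.ne']; ring_nf
  rw [Real.mul_rpow (by positivity) hY.le, ← Real.rpow_mul (by positivity), hexp,
    Real.div_rpow hm hM.le, hM_split, mul_assoc _ (Y ^ (1 - μ)), hY_split]
  field_simp

lemma Real.two_rpow_neg_mul_rpow_le {b x : ℝ} (hb : 0 ≤ b) (hx : 2 ≤ x) :
    2 ^ (-b) * x ^ b ≤ (x - 1) ^ b := by
  rw [Real.rpow_neg zero_le_two, ← Real.inv_rpow zero_le_two,
    ← Real.mul_rpow (by norm_num) (by positivity)]
  exact Real.rpow_le_rpow (by positivity) (by linarith) hb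

lemma graded_mesh_length_eq {Y μ : ℝ} {M : ℕ} {y h : ℕ → ℝ} (hM : (0 : ℝ) < M)
    (hy : ∀ m, m ≤ M → y m = ((m : ℝ) / M) ^ (1 / μ) * Y)
    (hh : ∀ m, 1 ≤ m → m ≤ M → h m = y m - y (m - 1)) (m : ℕ) (hm1 : 1 ≤ m) (hmM : m ≤ M) :
    h m = ((m : ℝ) ^ (1 / μ) - ((m : ℝ) - 1) ^ (1 / μ)) / (M : ℝ) ^ (1 / μ) * Y := by
  have hm : (1 : ℝ) ≤ m := by exact_mod_cast hm1
  rw [hh m hm1 hmM, hy m hmM, hy (m - 1) (by omega), Nat.cast_sub hm1, Nat.cast_one,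
    Real.div_rpow (by positivity) hM.le, Real.div_rpow (by linarith) hM.le]
  ring

/-- Graded mesh element lengths. -/
theorem graded_mesh_element_lengths
    (Y : ℝ) (hY : 0 < Y) (M : ℕ) (hM : 1 ≤ M) (μ : ℝ) (hμ : μ ∈ Set.Ioc (0:ℝ) 1)
    (y h : ℕ → ℝ)
    (hy : ∀ m, m ≤ M → y m = ((m : ℝ) / (M : ℝ)) ^ (1/μ) * Y)
    (hh : ∀ m, 1 ≤ m → m ≤ M → h m = y m - y (m - 1)) :
    h 1 = (M : ℝ) ^ (-(1/μ)) * Y ∧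
    ∀ m, 2 ≤ m → m ≤ M →
      (2 : ℝ) ^ ((μ - 1)/μ) / μ * (y m) ^ (1 - μ) * Y ^ μ * (M : ℝ)⁻¹ ≤ h m ∧
      h m ≤ 1/μ * (y m) ^ (1 - μ) * Y ^ μ * (M : ℝ)⁻¹ := by
  obtain ⟨hμ0, hμ1⟩ := hμ
  have hM0 : (0 : ℝ) < M := by exact_mod_cast hM
  have hlen := graded_mesh_length_eq hM0 hy hh
  refine ⟨?_, fun m hm2 hmM ↦ ?_⟩
  · rw [hlen 1 le_rfl hM, Nat.cast_one, sub_self, Real.one_rpow, Real.zero_rpow (by positivity),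
      Real.rpow_neg hM0.le]
    ring
  have hm : (2 : ℝ) ≤ m := by exact_mod_cast hm2
  have hnode := graded_node_rpow_mul_eq (m := (m : ℝ)) hY hM0 (by positivity) hμ0
  rw [← hy m hmM] at hnode
  have ha : 1 ≤ 1 / μ := by rw [le_div_iff₀ hμ0]; linarith
  obtain ⟨hlow, hup⟩ := Real.rpow_sub_rpow_mem_Icc ha (by linarith : (0 : ℝ) ≤ m - 1) (sub_one_lt _)
  rw [sub_sub_cancel, mul_one] at hlow hup
  have hhalf := Real.two_rpow_neg_mul_rpow_le (by linarith : 0 ≤ 1 / μ - 1) hm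
  have hexp : (μ - 1) / μ = -(1 / μ - 1) := by field_simp; ring
  rw [hlen m (by omega) hmM, hexp]
  constructor
  · calc (2 : ℝ) ^ (-(1 / μ - 1)) / μ * y m ^ (1 - μ) * Y ^ μ * (M : ℝ)⁻¹
        = 1 / μ * (2 ^ (-(1 / μ - 1)) * (m : ℝ) ^ (1 / μ - 1)) / (M : ℝ) ^ (1 / μ) * Y := by
          linear_combination 2 ^ (-(1 / μ - 1)) / μ * hnode
      _ ≤ 1 / μ * ((m : ℝ) - 1) ^ (1 / μ - 1) / (M : ℝ) ^ (1 / μ) * Y := by gcongr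
      _ ≤ _ := by gcongr
  · calc _ ≤ 1 / μ * (m : ℝ) ^ (1 / μ - 1) / (M : ℝ) ^ (1 / μ) * Y := by gcongr
      _ = _ := by linear_combination -1 / μ * hnode
end

section
/- Let s ∈ (0,1). For every n ∈ ℕ₀ and every z > 0, the n-th derivative of the function z ↦ z^{s} K_{s}(z) satisfies (d/dz)^n (z^{s} K_{s}(z)) = Σ_{m=0}^{n} a_m^n z^{s−m} K_{s−(n−m)}(z), where a_0^n = (−1)^n, a_m^n = (−1)^{n+m} 2^{−m} n!/(m!(n−2m)!) for 1 ≤ m ≤ ⌊n/2⌋, and a_m^n = 0 for ⌊n/2⌋ < m ≤ n. -/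
/-- The modified Bessel function of the second kind,
`K_ν(z) = ∫₀^∞ exp(−z cosh t) cosh(ν t) dt`. -/
noncomputable def besselK (ν z : ℝ) : ℝ :=
  ∫ t in Set.Ioi (0:ℝ), Real.exp (-z * Real.cosh t) * Real.cosh (ν * t)

/-- The coefficients `a_m^n` appearing in the formula for the `n`-th derivative of
`z^s K_s(z)`. -/
noncomputable def coefA (n m : ℕ) : ℝ :=
  if m = 0 then (-1 : ℝ) ^ n
  else if m ≤ n / 2 then
    (-1 : ℝ) ^ (n + m) * (1 / 2 ^ m) * (n.factorial : ℝ) /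
      ((m.factorial : ℝ) * ((n - 2 * m).factorial : ℝ))
  else 0

/-!
Differentiating under the integral sign gives `K_ν' = -(K_{ν+1} + K_{ν-1}) / 2`, and integrating
`d/dt (exp (-z cosh t) sinh (ν t))` over `(0, ∞)` gives `K_{ν+1} - K_{ν-1} = (2ν / z) K_ν`.
Together they yield `(z^α K_ν)' = (α - ν) z^{α-1} K_ν - z^α K_{ν-1}`, so differentiating the
term `z^{s-m} K_{s-n+m}` of the `n`-th derivative produces
`(n - 2m) z^{s-m-1} K_{s-n+m} - z^{s-m} K_{s-n+m-1}`, two terms of the `(n+1)`-st.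
Collecting them, the formula propagates because `a_0^{n+1} = -a_0^n` and
`a_{m+1}^{n+1} = (n - 2m) a_m^n - a_{m+1}^n`.
-/

open Real MeasureTheory Set Filter

noncomputable def besselKIntegrand (ν z t : ℝ) : ℝ := exp (-z * cosh t) * cosh (ν * t)

lemma sq_div_four_le_cosh (t : ℝ) : t ^ 2 / 4 ≤ cosh t := by
  have h := quadratic_le_exp_of_nonneg (abs_nonneg t)
  rw [← cosh_abs, cosh_eq]
  nlinarith [exp_pos (-|t|), sq_abs t, abs_nonneg t]

lemma integrable_exp_neg_mul_cosh_mul_exp {z : ℝ} (hz : 0 < z) (c : ℝ) :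
    Integrable fun t => exp (-z * cosh t) * exp (c * t) := by
  refine ((integrable_exp_neg_mul_sq (by positivity : 0 < z / 8)).const_mul
    (exp (2 * c ^ 2 / z))).mono' (by fun_prop) (ae_of_all _ fun t => ?_)
  have hcosh := sq_div_four_le_cosh t
  have hct : c * t ≤ z / 8 * t ^ 2 + 2 * c ^ 2 / z := by
    rw [← sub_nonneg,
      show z / 8 * t ^ 2 + 2 * c ^ 2 / z - c * t = (z * t - 4 * c) ^ 2 / (8 * z) by
        field_simp; ring]
    positivity
  rw [norm_of_nonneg (by positivity), ← exp_add, ← exp_add]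
  apply exp_le_exp.2
  nlinarith [mul_le_mul_of_nonneg_left hcosh hz.le]

lemma integrable_besselKIntegrand (ν : ℝ) {z : ℝ} (hz : 0 < z) :
    Integrable (besselKIntegrand ν z) := by
  have h : besselKIntegrand ν z =
      fun t => (exp (-z * cosh t) * exp (ν * t) + exp (-z * cosh t) * exp (-ν * t)) / 2 := by
    ext t
    rw [besselKIntegrand, cosh_eq (ν * t), neg_mul ν]
    ring
  rw [h]
  exact ((integrable_exp_neg_mul_cosh_mul_exp hz ν).add
    (integrable_exp_neg_mul_cosh_mul_exp hz (-ν))).div_const 2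

lemma besselKIntegrand_add_one_add_sub_one (ν z t : ℝ) :
    besselKIntegrand (ν + 1) z t + besselKIntegrand (ν - 1) z t =
      2 * cosh t * besselKIntegrand ν z t := by
  simp only [besselKIntegrand, add_mul, sub_mul, one_mul, cosh_add, cosh_sub]
  ring

lemma besselKIntegrand_add_one_sub_sub_one (ν z t : ℝ) :
    besselKIntegrand (ν + 1) z t - besselKIntegrand (ν - 1) z t =
      2 * sinh t * (exp (-z * cosh t) * sinh (ν * t)) := by
  simp only [besselKIntegrand, add_mul, sub_mul, one_mul, cosh_add, cosh_sub]
  ring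

lemma hasDerivAt_besselKIntegrand (ν t x : ℝ) :
    HasDerivAt (besselKIntegrand ν · t) (-cosh t * besselKIntegrand ν x t) x := by
  have h : HasDerivAt (fun x => exp (-x * cosh t) * cosh (ν * t))
      (exp (-x * cosh t) * (-1 * cosh t) * cosh (ν * t)) x :=
    (((hasDerivAt_neg x).mul_const (cosh t)).exp).mul_const (cosh (ν * t))
  exact h.congr_deriv (by unfold besselKIntegrand; ring)

lemma integrable_cosh_mul_besselKIntegrand (ν : ℝ) {z : ℝ} (hz : 0 < z) :
    Integrable fun t => cosh t * besselKIntegrand ν z t := by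
  refine (((integrable_besselKIntegrand (ν + 1) hz).add
    (integrable_besselKIntegrand (ν - 1) hz)).div_const 2).congr (ae_of_all _ fun t => ?_)
  simp only [Pi.add_apply, besselKIntegrand_add_one_add_sub_one]
  ring

lemma hasDerivAt_besselK (ν : ℝ) {z : ℝ} (hz : 0 < z) :
    HasDerivAt (besselK ν) (-(besselK (ν + 1) z + besselK (ν - 1) z) / 2) z := by
  have hbound : ∀ t, ∀ x ∈ Ioi (z / 2),
      ‖-cosh t * besselKIntegrand ν x t‖ ≤ cosh t * besselKIntegrand ν (z / 2) t := by
    intro t x hx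
    rw [neg_mul, norm_neg, norm_of_nonneg (by unfold besselKIntegrand; positivity)]
    unfold besselKIntegrand
    gcongr
    exact hx.out.le
  obtain ⟨-, h⟩ := hasDerivAt_integral_of_dominated_loc_of_deriv_le
    (μ := volume.restrict (Ioi 0)) (F := fun x t => besselKIntegrand ν x t)
    (Ioi_mem_nhds (half_lt_self hz))
    (Eventually.of_forall fun x => by unfold besselKIntegrand; fun_prop)
    (integrable_besselKIntegrand ν hz).integrableOn
    (Continuous.aestronglyMeasurable (by unfold besselKIntegrand; fun_prop))
    (ae_of_all _ hbound) (integrable_cosh_mul_besselKIntegrand ν (half_pos hz)).integrableOn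
    (ae_of_all _ fun t x _ => hasDerivAt_besselKIntegrand ν t x)
  have hK : besselK ν = fun x => ∫ t in Ioi 0, besselKIntegrand ν x t := rfl
  have hval : ∫ t in Ioi 0, -cosh t * besselKIntegrand ν z t =
      -(besselK (ν + 1) z + besselK (ν - 1) z) / 2 := by
    have hpt (t : ℝ) : -cosh t * besselKIntegrand ν z t =
        -((besselKIntegrand (ν + 1) z t + besselKIntegrand (ν - 1) z t) / 2) := by
      rw [besselKIntegrand_add_one_add_sub_one]
      ring
    simp only [hpt]
    rw [integral_neg, integral_div, integral_add (integrable_besselKIntegrand _ hz).integrableOn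
      (integrable_besselKIntegrand _ hz).integrableOn, neg_div]
    rfl
  rwa [hK, ← hval]

lemma integrable_exp_neg_mul_cosh_mul_sinh (ν : ℝ) {z : ℝ} (hz : 0 < z) :
    Integrable fun t => exp (-z * cosh t) * sinh (ν * t) := by
  have h : (fun t => exp (-z * cosh t) * sinh (ν * t)) =
      fun t => (exp (-z * cosh t) * exp (ν * t) - exp (-z * cosh t) * exp (-ν * t)) / 2 := by
    ext t
    rw [sinh_eq (ν * t), neg_mul ν]
    ring
  rw [h]
  exact ((integrable_exp_neg_mul_cosh_mul_exp hz ν).sub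
    (integrable_exp_neg_mul_cosh_mul_exp hz (-ν))).div_const 2

lemma hasDerivAt_exp_neg_mul_cosh_mul_sinh (ν z t : ℝ) :
    HasDerivAt (fun t => exp (-z * cosh t) * sinh (ν * t))
      (ν * besselKIntegrand ν z t - z / 2 * besselKIntegrand (ν + 1) z t +
        z / 2 * besselKIntegrand (ν - 1) z t) t := by
  have h : HasDerivAt (fun t => exp (-z * cosh t) * sinh (ν * t))
      (exp (-z * cosh t) * (-z * sinh t) * sinh (ν * t) +
        exp (-z * cosh t) * (cosh (ν * t) * (ν * 1))) t :=
    ((hasDerivAt_cosh t).const_mul (-z)).exp.mul ((hasDerivAt_id' t).const_mul ν).sinh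
  refine h.congr_deriv ?_
  rw [sub_add, ← mul_sub, besselKIntegrand_add_one_sub_sub_one]
  unfold besselKIntegrand
  ring

lemma besselK_add_one_sub_besselK_sub_one (ν : ℝ) {z : ℝ} (hz : 0 < z) :
    besselK (ν + 1) z - besselK (ν - 1) z = 2 * ν / z * besselK ν z := by
  have hint (μ : ℝ) : IntegrableOn (besselKIntegrand μ z) (Ioi 0) :=
    (integrable_besselKIntegrand μ hz).integrableOn
  have hderiv := hasDerivAt_exp_neg_mul_cosh_mul_sinh ν z
  have hderiv_int := (((hint ν).const_mul ν).sub ((hint (ν + 1)).const_mul (z / 2))).add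
    ((hint (ν - 1)).const_mul (z / 2))
  have hibp := integral_Ioi_of_hasDerivAt_of_tendsto' (a := 0) (fun t _ => hderiv t) hderiv_int
    (tendsto_zero_of_hasDerivAt_of_integrableOn_Ioi (fun t _ => hderiv t) hderiv_int
      (integrable_exp_neg_mul_cosh_mul_sinh ν hz).integrableOn)
  rw [integral_add (by exact ((hint _).const_mul _).sub ((hint _).const_mul _))
      ((hint _).const_mul _), integral_sub ((hint _).const_mul _) ((hint _).const_mul _),
    integral_const_mul, integral_const_mul, integral_const_mul, mul_zero, sinh_zero, mul_zero,
    sub_zero] at hibp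
  change ν * besselK ν z - z / 2 * besselK (ν + 1) z + z / 2 * besselK (ν - 1) z = 0 at hibp
  field_simp
  linarith

lemma hasDerivAt_rpow_mul_besselK (α ν : ℝ) {z : ℝ} (hz : 0 < z) :
    HasDerivAt (fun w => w ^ α * besselK ν w)
      ((α - ν) * z ^ (α - 1) * besselK ν z - z ^ α * besselK (ν - 1) z) z := by
  have h := (hasDerivAt_rpow_const (p := α) (Or.inl hz.ne')).mul (hasDerivAt_besselK ν hz)
  refine h.congr_deriv ?_
  have hrec := besselK_add_one_sub_besselK_sub_one ν hz
  rw [show besselK (ν + 1) z = besselK (ν - 1) z + 2 * ν / z * besselK ν z by linarith,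
    rpow_sub_one hz.ne']
  field_simp
  ring

-- The falling factorial vanishes for `n < 2 m`, so this one formula covers all cases of `coefA`.
lemma coefA_eq_descFactorial (n m : ℕ) :
    coefA n m = (-1) ^ (n + m) * n.descFactorial (2 * m) / (2 ^ m * m.factorial) := by
  unfold coefA
  split_ifs with hm hmn
  · simp [hm]
  · rw [← Nat.factorial_mul_descFactorial (show 2 * m ≤ n by omega)]
    push_cast
    field_simp
  · rw [Nat.descFactorial_eq_zero_iff_lt.mpr (by omega)]
    simp

lemma coefA_eq_zero_of_lt {n m : ℕ} (h : n < 2 * m) : coefA n m = 0 := by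
  rw [coefA_eq_descFactorial, Nat.descFactorial_eq_zero_iff_lt.mpr h]
  simp

lemma Nat.cast_descFactorial_succ {R : Type*} [Ring R] (n k : ℕ) :
    (n.descFactorial (k + 1) : R) = n.descFactorial k * (n - k) := by
  rw [← descPochhammer_eval_eq_descFactorial, descPochhammer_succ_eval,
    descPochhammer_eval_eq_descFactorial]

lemma coefA_succ_zero (n : ℕ) : coefA (n + 1) 0 = -coefA n 0 := by
  simp [coefA, pow_succ]

lemma coefA_succ_succ (n m : ℕ) :
    coefA (n + 1) (m + 1) = (n - 2 * m) * coefA n m - coefA n (m + 1) := by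
  simp only [coefA_eq_descFactorial, show 2 * (m + 1) = 2 * m + 1 + 1 by ring,
    Nat.succ_descFactorial_succ, Nat.cast_mul, Nat.cast_descFactorial_succ, Nat.factorial_succ]
  push_cast
  field_simp
  ring

lemma sum_coefA_succ_mul (n : ℕ) (g : ℕ → ℝ) :
    ∑ m ∈ Finset.range (n + 2), coefA (n + 1) m * g m =
      ∑ m ∈ Finset.range (n + 1), coefA n m * ((n - 2 * m) * g (m + 1) - g m) := by
  have hshift : ∑ m ∈ Finset.range (n + 1), coefA n m * g m =
      ∑ m ∈ Finset.range (n + 1), coefA n (m + 1) * g (m + 1) + coefA n 0 * g 0 := by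
    rw [← Finset.sum_range_succ' (fun m => coefA n m * g m), Finset.sum_range_succ _ (n + 1),
      coefA_eq_zero_of_lt (by omega), zero_mul, add_zero]
  have hsucc (m : ℕ) : coefA (n + 1) (m + 1) * g (m + 1) =
      coefA n m * ((n - 2 * m) * g (m + 1)) - coefA n (m + 1) * g (m + 1) := by
    rw [coefA_succ_succ]
    ring
  rw [Finset.sum_range_succ']
  simp only [hsucc, coefA_succ_zero, mul_sub, Finset.sum_sub_distrib, hshift]
  ring

noncomputable def besselTerm (s : ℝ) (n m : ℕ) (z : ℝ) : ℝ :=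
  z ^ (s - m) * besselK (s - n + m) z

lemma hasDerivAt_besselTerm (s : ℝ) (n m : ℕ) {z : ℝ} (hz : 0 < z) :
    HasDerivAt (besselTerm s n m)
      ((n - 2 * m) * besselTerm s (n + 1) (m + 1) z - besselTerm s (n + 1) m z) z := by
  refine (hasDerivAt_rpow_mul_besselK (s - m) (s - n + m) hz).congr_deriv ?_
  simp only [besselTerm]
  push_cast
  ring_nf

lemma hasDerivAt_sum_besselTerm (s : ℝ) (n : ℕ) {z : ℝ} (hz : 0 < z) :
    HasDerivAt (fun w => ∑ m ∈ Finset.range (n + 1), coefA n m * besselTerm s n m w)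
      (∑ m ∈ Finset.range (n + 2), coefA (n + 1) m * besselTerm s (n + 1) m z) z := by
  rw [sum_coefA_succ_mul]
  exact HasDerivAt.fun_sum fun m _ => (hasDerivAt_besselTerm s n m hz).const_mul _

lemma eqOn_iteratedDerivWithin_rpow_mul_besselK (s : ℝ) (n : ℕ) :
    EqOn (iteratedDerivWithin n (fun w => w ^ s * besselK s w) (Ioi 0))
      (fun w => ∑ m ∈ Finset.range (n + 1), coefA n m * besselTerm s n m w) (Ioi 0) := by
  induction n with
  | zero =>
    intro w _
    simp [besselTerm, coefA]
  | succ n ih =>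
    intro w hw
    rw [iteratedDerivWithin_succ, derivWithin_of_isOpen isOpen_Ioi hw,
      (ih.eventuallyEq_of_mem (isOpen_Ioi.mem_nhds hw)).deriv_eq]
    exact (hasDerivAt_sum_besselTerm s n hw).deriv

theorem iteratedDeriv_rpow_mul_besselK_general
    (s : ℝ) (n : ℕ) (z : ℝ) (hz : 0 < z) :
    iteratedDerivWithin n (fun w : ℝ => w ^ s * besselK s w) (Set.Ioi (0:ℝ)) z
      = ∑ m ∈ Finset.range (n + 1),
          coefA n m * z ^ (s - (m : ℝ)) * besselK (s - ((n - m : ℕ) : ℝ)) z := by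
  rw [eqOn_iteratedDerivWithin_rpow_mul_besselK s n hz]
  refine Finset.sum_congr rfl fun m hm => ?_
  rw [besselTerm, Nat.cast_sub (Finset.mem_range_succ_iff.mp hm), mul_assoc, sub_sub_eq_add_sub,
    add_sub_right_comm]

/-- Representation of the `n`-th derivative of `z^s K_s(z)`. -/
theorem iteratedDeriv_rpow_mul_besselK
    (s : ℝ) (hs : s ∈ Set.Ioo (0:ℝ) 1) (n : ℕ) (z : ℝ) (hz : 0 < z) :
    iteratedDerivWithin n (fun w : ℝ => w ^ s * besselK s w) (Set.Ioi (0:ℝ)) z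
      = ∑ m ∈ Finset.range (n + 1),
          coefA n m * z ^ (s - (m : ℝ)) * besselK (s - ((n - m : ℕ) : ℝ)) z :=
  iteratedDeriv_rpow_mul_besselK_general s n z hz
end

section
/- Let α ∈ (−1,1), a > 0, and let f : [0,a] → ℝ be continuously differentiable. Then ∫₀^a y^{α} (f(y) − f(a))² dy ≤ (2/(α+1))² ∫₀^a y^{α+2} (f'(y))² dy. -/
/-!
Put `g = f - f a`. Integrating the derivative of `y ^ (α + 1) * g y ^ 2`, which vanishes at `0`
because `α + 1 > 0` and at `a` because `g a = 0`, gives `(α + 1) ∫ y^α g² = -2 ∫ y^α · y g g'`. With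
`c = 2 / (α + 1)`, integrating `0 ≤ y^α (g + c y g')²` and eliminating the cross term with this
identity leaves `∫ y^α g² ≤ c² ∫ y^α (y g')²`.
-/

open MeasureTheory Real Set

section Hardy

variable {α a : ℝ} {g g' : ℝ → ℝ}

lemma intervalIntegrable_rpow_mul_of_continuousOn (hα : -1 < α) {h : ℝ → ℝ}
    (hh : ContinuousOn h (uIcc 0 a)) : IntervalIntegrable (fun y => y ^ α * h y) volume 0 a :=
  (intervalIntegral.intervalIntegrable_rpow' hα).mul_continuousOn hh

lemma hasDerivAt_rpow_add_one_mul_sq {y : ℝ} (hy : 0 < y) (hg : HasDerivAt g (g' y) y) :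
    HasDerivAt (fun y => y ^ (α + 1) * g y ^ 2)
      (y ^ α * ((α + 1) * g y ^ 2 + 2 * (y * g y * g' y))) y := by
  have hpow := Real.hasDerivAt_rpow_const (x := y) (p := α + 1) (Or.inl hy.ne')
  refine (hpow.mul (hg.pow 2)).congr_deriv ?_
  rw [add_sub_cancel_right, rpow_add_one hy.ne', Pi.pow_apply]
  ring

lemma integral_rpow_mul_deriv_rpow_add_one_mul_sq (hα : -1 < α) (ha : 0 ≤ a)
    (hg : ContinuousOn g (Icc 0 a)) (hg_deriv : ∀ y ∈ Ioo 0 a, HasDerivAt g (g' y) y)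
    (hg' : ContinuousOn g' (Icc 0 a)) :
    ∫ y in 0..a, y ^ α * ((α + 1) * g y ^ 2 + 2 * (y * g y * g' y)) = a ^ (α + 1) * g a ^ 2 := by
  have hα1 : 0 < α + 1 := by linarith
  have hcont : ContinuousOn (fun y => y ^ (α + 1) * g y ^ 2) (Icc 0 a) :=
    (continuousOn_id.rpow_const fun _ _ => Or.inr hα1.le).mul (hg.pow 2)
  rw [intervalIntegral.integral_eq_sub_of_hasDerivAt_of_le ha hcont
    (fun y hy => hasDerivAt_rpow_add_one_mul_sq hy.1 (hg_deriv y hy))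
    (intervalIntegrable_rpow_mul_of_continuousOn hα (by rw [uIcc_of_le ha]; fun_prop)),
    zero_rpow hα1.ne', zero_mul, sub_zero]

lemma integral_rpow_mul_sq_le_of_eq_zero (hα : -1 < α) (ha : 0 ≤ a)
    (hg : ContinuousOn g (Icc 0 a)) (hg_deriv : ∀ y ∈ Ioo 0 a, HasDerivAt g (g' y) y)
    (hg' : ContinuousOn g' (Icc 0 a)) (hga : g a = 0) :
    ∫ y in 0..a, y ^ α * g y ^ 2 ≤ (2 / (α + 1)) ^ 2 * ∫ y in 0..a, y ^ α * (y * g' y) ^ 2 := by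
  generalize hc_def : 2 / (α + 1) = c
  have hc : c * (α + 1) = 2 := hc_def ▸ div_mul_cancel₀ 2 (by linarith)
  set Z := fun y => y ^ α * ((α + 1) * g y ^ 2 + 2 * (y * g y * g' y))
  have hZ : ∫ y in 0..a, Z y = 0 := by
    rw [integral_rpow_mul_deriv_rpow_add_one_mul_sq hα ha hg hg_deriv hg', hga]
    simp
  have hint : ∀ {h : ℝ → ℝ}, ContinuousOn h (Icc 0 a) →
      IntervalIntegrable (fun y => y ^ α * h y) volume 0 a := fun hh =>
    intervalIntegrable_rpow_mul_of_continuousOn hα (by rwa [uIcc_of_le ha])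
  have hP := hint (h := fun y => g y ^ 2) (hg.pow 2)
  calc ∫ y in 0..a, y ^ α * g y ^ 2
      = (∫ y in 0..a, y ^ α * g y ^ 2) - c * ∫ y in 0..a, Z y := by rw [hZ, mul_zero, sub_zero]
    _ = ∫ y in 0..a, (y ^ α * g y ^ 2 - c * Z y) := by
      rw [intervalIntegral.integral_sub hP ((hint (by fun_prop)).const_mul c),
        intervalIntegral.integral_const_mul]
    _ ≤ ∫ y in 0..a, c ^ 2 * (y ^ α * (y * g' y) ^ 2) := by
      refine intervalIntegral.integral_mono_on ha (hP.sub ((hint (by fun_prop)).const_mul c))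
        ((hint (by fun_prop)).const_mul _) fun y hy => ?_
      have hsq := mul_nonneg (rpow_nonneg hy.1 α) (sq_nonneg (g y + c * y * g' y))
      linear_combination hsq - y ^ α * g y ^ 2 * hc
    _ = c ^ 2 * ∫ y in 0..a, y ^ α * (y * g' y) ^ 2 := intervalIntegral.integral_const_mul _ _

end Hardy

/-- Weighted Hardy-type inequality on `(0,a)`. -/
theorem weighted_hardy_inequality
    (α a : ℝ) (hα : α ∈ Set.Ioo (-1:ℝ) 1) (ha : 0 < a)
    (f f' : ℝ → ℝ)
    (hf : ∀ y ∈ Set.Icc (0:ℝ) a, HasDerivAt f (f' y) y)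
    (hf' : ContinuousOn f' (Set.Icc (0:ℝ) a)) :
    ∫ y in Set.Ioo (0:ℝ) a, y ^ α * (f y - f a) ^ 2 ≤
      (2 / (α + 1)) ^ 2 * ∫ y in Set.Ioo (0:ℝ) a, y ^ (α + 2) * f' y ^ 2 := by
  have hg_deriv : ∀ y ∈ Icc 0 a, HasDerivAt (fun y => f y - f a) (f' y) y :=
    fun y hy => (hf y hy).sub_const _
  have hardy := integral_rpow_mul_sq_le_of_eq_zero hα.1 ha.le
    (fun y hy => (hg_deriv y hy).continuousAt.continuousWithinAt)
    (fun y hy => hg_deriv y (Ioo_subset_Icc_self hy)) hf' (sub_self _)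
  simp only [intervalIntegral.integral_of_le ha.le, integral_Ioc_eq_integral_Ioo] at hardy
  refine hardy.trans_eq (congrArg _ (setIntegral_congr_fun measurableSet_Ioo fun y hy => ?_))
  rw [rpow_add hy.1, rpow_two]
  ring
end
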